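/- For |x| < 1 and |q| < 1, ∏_{k≥0}(1 + x q^k) = ∑_{n≥0} x^n q^{n(n-1)/2} / ∏_{k=1}^{n}(1 - q^k). -/

import Mathlib

open Finset Filter Topology

namespace EulerAux

noncomputable def D (q : ℂ) (n : ℕ) : ℂ := ∏ k ∈ Finset.range n, (1 - q ^ (k + 1))

noncomputable def f (q x : ℂ) (n : ℕ) : ℂ := x ^ n * q ^ (n * (n - 1) / 2) / D q n

noncomputable def S (q x : ℂ) : ℂ := ∑' n, f q x n

variable {q x : ℂ}

lemma q_pow_lt (hq : ‖q‖ < 1) (k : ℕ) : ‖q ^ (k + 1)‖ < 1 := by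
  rw [norm_pow]
  exact pow_lt_one₀ (norm_nonneg q) hq (Nat.succ_ne_zero k)

lemma factor_ne (hq : ‖q‖ < 1) (k : ℕ) : (1 : ℂ) - q ^ (k + 1) ≠ 0 := by
  intro h
  have h1 : q ^ (k + 1) = 1 := by linear_combination -h
  have h2 := q_pow_lt hq k
  rw [h1] at h2
  simp at h2

lemma D_ne (hq : ‖q‖ < 1) (n : ℕ) : D q n ≠ 0 :=
  Finset.prod_ne_zero_iff.2 fun k _ => factor_ne hq k

lemma exp_le_one_sub {r t : ℝ} (hr : r < 1) (ht : 0 ≤ t) (htr : t ≤ r) :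
    Real.exp (-(t / (1 - r))) ≤ 1 - t := by
  have h1 : (0:ℝ) < 1 - r := by linarith
  have h2 : (0:ℝ) < 1 - t := by linarith
  have hs : 0 ≤ t / (1 - r) := div_nonneg ht h1.le
  have hexp : 1 + t / (1 - r) ≤ Real.exp (t / (1 - r)) := by
    have := Real.add_one_le_exp (t / (1 - r)); linarith
  have key : 1 ≤ (1 - t) * (1 + t / (1 - r)) := by
    rw [show (1 - t) * (1 + t / (1 - r)) = ((1 - t) * (1 - r + t)) / (1 - r) by
      field_simp]
    rw [le_div_iff₀ h1]
    nlinarith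
  have hmain : 1 ≤ (1 - t) * Real.exp (t / (1 - r)) :=
    key.trans (mul_le_mul_of_nonneg_left hexp h2.le)
  have hep := Real.exp_pos (t / (1 - r))
  rw [Real.exp_neg, inv_eq_one_div, div_le_iff₀ hep]
  linarith

lemma D_lb (hq : ‖q‖ < 1) (n : ℕ) :
    Real.exp (-(‖q‖ / (1 - ‖q‖) ^ 2)) ≤ ‖D q n‖ := by
  have h1 : (0:ℝ) < 1 - ‖q‖ := by linarith
  have step1 : Real.exp (-(‖q‖ / (1 - ‖q‖) ^ 2)) ≤
      Real.exp (-((∑ k ∈ range n, ‖q‖ ^ (k + 1)) / (1 - ‖q‖))) := by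
    apply Real.exp_le_exp.2
    rw [neg_le_neg_iff, div_le_div_iff₀ h1 (by positivity)]
    have hgeo : ∑ k ∈ range n, ‖q‖ ^ (k + 1) ≤ ‖q‖ / (1 - ‖q‖) := by
      have : ∑ k ∈ range n, ‖q‖ ^ (k + 1) = ‖q‖ * ∑ k ∈ range n, ‖q‖ ^ k := by
        rw [Finset.mul_sum]; exact Finset.sum_congr rfl fun k _ => by ring
      rw [this, div_eq_mul_inv]
      apply mul_le_mul_of_nonneg_left _ (norm_nonneg q)
      calc ∑ k ∈ range n, ‖q‖ ^ k ≤ ∑' k : ℕ, ‖q‖ ^ k :=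
            Summable.sum_le_tsum _ (fun k _ => by positivity)
              (summable_geometric_of_lt_one (norm_nonneg q) hq)
        _ = (1 - ‖q‖)⁻¹ := tsum_geometric_of_lt_one (norm_nonneg q) hq
    calc (∑ k ∈ range n, ‖q‖ ^ (k + 1)) * (1 - ‖q‖) ^ 2
        ≤ (‖q‖ / (1 - ‖q‖)) * (1 - ‖q‖) ^ 2 := by
          apply mul_le_mul_of_nonneg_right hgeo (by positivity)
      _ = ‖q‖ * (1 - ‖q‖) := by rw [sq, ← mul_assoc, div_mul_cancel₀ _ h1.ne']
  have step2 : Real.exp (-((∑ k ∈ range n, ‖q‖ ^ (k + 1)) / (1 - ‖q‖))) ≤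
      ∏ k ∈ range n, (1 - ‖q‖ ^ (k + 1)) := by
    rw [show -((∑ k ∈ range n, ‖q‖ ^ (k + 1)) / (1 - ‖q‖)) =
        ∑ k ∈ range n, -(‖q‖ ^ (k + 1) / (1 - ‖q‖)) by
      rw [Finset.sum_neg_distrib, ← Finset.sum_div]]
    rw [Real.exp_sum]
    apply Finset.prod_le_prod (fun k _ => (Real.exp_pos _).le)
    intro k _
    exact exp_le_one_sub hq (by positivity)
      (pow_le_of_le_one (norm_nonneg q) hq.le (Nat.succ_ne_zero k))
  have step3 : ∏ k ∈ range n, (1 - ‖q‖ ^ (k + 1)) ≤ ‖D q n‖ := by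
    rw [D, norm_prod]
    apply Finset.prod_le_prod
    · intro k _
      have : ‖q‖ ^ (k + 1) < 1 := by
        have := q_pow_lt hq k; rwa [norm_pow] at this
      linarith
    · intro k _
      calc 1 - ‖q‖ ^ (k + 1) = ‖(1:ℂ)‖ - ‖q ^ (k + 1)‖ := by simp [norm_pow]
        _ ≤ ‖1 - q ^ (k + 1)‖ := norm_sub_norm_le _ _
  exact step1.trans (step2.trans step3)

lemma f_bound (hq : ‖q‖ < 1) (x : ℂ) (n : ℕ) :
    ‖f q x n‖ ≤ Real.exp (‖q‖ / (1 - ‖q‖) ^ 2) * ‖x‖ ^ n := by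
  have hD := D_lb hq n
  have hDpos : (0:ℝ) < ‖D q n‖ := lt_of_lt_of_le (Real.exp_pos _) hD
  rw [f, norm_div, norm_mul, norm_pow, norm_pow, div_le_iff₀ hDpos]
  calc ‖x‖ ^ n * ‖q‖ ^ (n * (n - 1) / 2)
      ≤ ‖x‖ ^ n * 1 := by
        apply mul_le_mul_of_nonneg_left _ (by positivity)
        exact pow_le_one₀ (norm_nonneg q) hq.le
    _ = ‖x‖ ^ n := mul_one _
    _ ≤ (Real.exp (‖q‖ / (1 - ‖q‖) ^ 2) * ‖x‖ ^ n) * Real.exp (-(‖q‖ / (1 - ‖q‖) ^ 2)) := by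
        rw [mul_assoc, mul_comm (‖x‖ ^ n), ← mul_assoc, ← Real.exp_add]
        simp
    _ ≤ (Real.exp (‖q‖ / (1 - ‖q‖) ^ 2) * ‖x‖ ^ n) * ‖D q n‖ := by
        apply mul_le_mul_of_nonneg_left hD (by positivity)

lemma f_summable (hq : ‖q‖ < 1) (hx : ‖x‖ < 1) : Summable (f q x) := by
  apply Summable.of_norm_bounded _ (f_bound hq x)
  exact (summable_geometric_of_lt_one (norm_nonneg x) hx).mul_left _


lemma tri (n : ℕ) : (n + 1) * ((n + 1) - 1) / 2 = n * (n - 1) / 2 + n := by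
  rcases n with _ | m
  · simp
  · have h : ∀ k : ℕ, (k + 1) * k / 2 = k * (k + 1) / 2 := fun k => by ring_nf
    simp only [Nat.add_sub_cancel]
    rw [show (m + 1 + 1) * (m + 1) = (m + 1) * m + 2 * (m + 1) by ring]
    rw [Nat.add_mul_div_left _ _ (by norm_num : 0 < 2)]

lemma norm_mul_q_lt (hq : ‖q‖ < 1) (hx : ‖x‖ < 1) : ‖x * q‖ < 1 := by
  rw [norm_mul]
  calc ‖x‖ * ‖q‖ ≤ 1 * ‖q‖ := mul_le_mul_of_nonneg_right hx.le (norm_nonneg q)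
    _ = ‖q‖ := one_mul _
    _ < 1 := hq

lemma func_eq (hq : ‖q‖ < 1) (hx : ‖x‖ < 1) : S q x = (1 + x) * S q (x * q) := by
  have hxq : ‖x * q‖ < 1 := norm_mul_q_lt hq hx
  set g : ℕ → ℂ := fun n => x ^ n * q ^ (n * (n - 1) / 2) * (1 - q ^ n) / D q n with hg
  have key : ∀ n, f q x n = f q (x * q) n + g n := by
    intro n
    have hD := D_ne hq n
    rw [f, f, hg]
    simp only []
    rw [mul_pow]
    field_simp
    ring
  have hs1 : Summable (f q (x * q)) := f_summable hq hxq
  have hs0 : Summable (f q x) := f_summable hq hx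
  have hsg : Summable g := by
    have : g = fun n => f q x n - f q (x * q) n := by
      funext n; rw [key n]; ring
    rw [this]; exact hs0.sub hs1
  have h0 : S q x = S q (x * q) + ∑' n, g n := by
    rw [S, S]
    calc ∑' n, f q x n = ∑' n, (f q (x * q) n + g n) := by
          exact tsum_congr key
      _ = (∑' n, f q (x * q) n) + ∑' n, g n := Summable.tsum_add hs1 hsg
  have hgsucc : ∀ n : ℕ, g (n + 1) = x * f q (x * q) n := by
    intro n
    have hDn := D_ne hq n
    have hfac := factor_ne hq n
    have hDsucc : D q (n + 1) = D q n * (1 - q ^ (n + 1)) := Finset.prod_range_succ _ _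
    rw [hg]
    simp only []
    rw [tri n, hDsucc, f, mul_pow, pow_add]
    field_simp
    ring
  have h1 : ∑' n, g n = x * S q (x * q) := by
    rw [Summable.tsum_eq_zero_add hsg]
    have hg0 : g 0 = 0 := by rw [hg]; simp
    rw [hg0, zero_add]
    calc ∑' n, g (n + 1) = ∑' n, x * f q (x * q) n := tsum_congr hgsucc
      _ = x * ∑' n, f q (x * q) n := tsum_mul_left
      _ = x * S q (x * q) := rfl
  rw [h0, h1]; ring

lemma iterate_eq (hq : ‖q‖ < 1) (hx : ‖x‖ < 1) (N : ℕ) :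
    S q x = (∏ k ∈ range N, (1 + x * q ^ k)) * S q (x * q ^ N) := by
  induction N with
  | zero => simp
  | succ N ih =>
    have hnorm : ‖x * q ^ N‖ < 1 := by
      rw [norm_mul, norm_pow]
      calc ‖x‖ * ‖q‖ ^ N ≤ ‖x‖ * 1 :=
            mul_le_mul_of_nonneg_left (pow_le_one₀ (norm_nonneg q) hq.le) (norm_nonneg x)
        _ = ‖x‖ := mul_one _
        _ < 1 := hx
    rw [ih, func_eq hq hnorm, Finset.prod_range_succ]
    rw [show x * q ^ N * q = x * q ^ (N + 1) by rw [pow_succ]; ring]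
    ring

lemma S_tendsto_one (hq : ‖q‖ < 1) (hx : ‖x‖ < 1) :
    Tendsto (fun N : ℕ => S q (x * q ^ N)) atTop (𝓝 1) := by
  set M : ℝ := Real.exp (‖q‖ / (1 - ‖q‖) ^ 2) with hM
  have hM0 : 0 < M := Real.exp_pos _
  have hxn : ∀ N : ℕ, ‖x * q ^ N‖ ≤ ‖x‖ * ‖q‖ ^ N := by
    intro N; rw [norm_mul, norm_pow]
  have hxlt : ∀ N : ℕ, ‖x * q ^ N‖ < 1 := by
    intro N
    calc ‖x * q ^ N‖ ≤ ‖x‖ * ‖q‖ ^ N := hxn N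
      _ ≤ ‖x‖ * 1 := mul_le_mul_of_nonneg_left (pow_le_one₀ (norm_nonneg q) hq.le) (norm_nonneg x)
      _ = ‖x‖ := mul_one _
      _ < 1 := hx
  have key : ∀ N : ℕ, ‖S q (x * q ^ N) - 1‖ ≤ (M / (1 - ‖x‖)) * ‖q‖ ^ N := by
    intro N
    set y := x * q ^ N with hy
    have hs : Summable (f q y) := f_summable hq (hxlt N)
    have hS : S q y - 1 = ∑' n, f q y (n + 1) := by
      rw [S, Summable.tsum_eq_zero_add hs]
      have : f q y 0 = 1 := by rw [f, D]; simp
      rw [this]; ring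
    rw [hS]
    have hyx : ‖y‖ ≤ ‖x‖ * ‖q‖ ^ N := hxn N
    have hynorm : ∀ n : ℕ, ‖f q y (n + 1)‖ ≤ (M * ‖q‖ ^ N) * ‖x‖ ^ n := by
      intro n
      calc ‖f q y (n + 1)‖ ≤ M * ‖y‖ ^ (n + 1) := f_bound hq y (n + 1)
        _ ≤ M * ((‖x‖ * ‖q‖ ^ N) ^ (n + 1)) := by
            apply mul_le_mul_of_nonneg_left (pow_le_pow_left₀ (norm_nonneg y) hyx _) hM0.le
        _ = (M * ‖q‖ ^ N) * (‖x‖ ^ n * (‖x‖ * (‖q‖ ^ N) ^ n)) := by ring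
        _ ≤ (M * ‖q‖ ^ N) * (‖x‖ ^ n * (1 * 1)) := by
            apply mul_le_mul_of_nonneg_left _ (by positivity)
            apply mul_le_mul_of_nonneg_left _ (by positivity)
            apply mul_le_mul hx.le _ (by positivity) zero_le_one
            exact pow_le_one₀ (by positivity) (pow_le_one₀ (norm_nonneg q) hq.le)
        _ = (M * ‖q‖ ^ N) * ‖x‖ ^ n := by ring
    have hsum : Summable (fun n : ℕ => (M * ‖q‖ ^ N) * ‖x‖ ^ n) :=
      (summable_geometric_of_lt_one (norm_nonneg x) hx).mul_left _
    calc ‖∑' n, f q y (n + 1)‖ ≤ ∑' n, ‖f q y (n + 1)‖ := by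
          apply norm_tsum_le_tsum_norm
          exact hsum.of_nonneg_of_le (fun n => norm_nonneg _) hynorm
      _ ≤ ∑' n : ℕ, (M * ‖q‖ ^ N) * ‖x‖ ^ n := by
          apply Summable.tsum_le_tsum hynorm _ hsum
          exact hsum.of_nonneg_of_le (fun n => norm_nonneg _) hynorm
      _ = (M * ‖q‖ ^ N) * ∑' n : ℕ, ‖x‖ ^ n := tsum_mul_left
      _ = (M * ‖q‖ ^ N) * (1 - ‖x‖)⁻¹ := by
          rw [tsum_geometric_of_lt_one (norm_nonneg x) hx]
      _ = (M / (1 - ‖x‖)) * ‖q‖ ^ N := by ring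
  have htend : Tendsto (fun N : ℕ => S q (x * q ^ N) - 1) atTop (𝓝 0) := by
    apply squeeze_zero_norm key
    rw [show (0:ℝ) = (M / (1 - ‖x‖)) * 0 by ring]
    exact (tendsto_pow_atTop_nhds_zero_of_norm_lt_one (by rwa [Real.norm_eq_abs, abs_of_nonneg (norm_nonneg q)])).const_mul _
  have := htend.add_const 1
  simpa using this

lemma one_add_ne (hx : ‖x‖ < 1) (hq : ‖q‖ < 1) (k : ℕ) : (1 : ℂ) + x * q ^ k ≠ 0 := by
  intro h
  have h1 : x * q ^ k = -1 := by linear_combination h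
  have h2 : ‖x * q ^ k‖ < 1 := by
    rw [norm_mul, norm_pow]
    calc ‖x‖ * ‖q‖ ^ k ≤ ‖x‖ * 1 :=
          mul_le_mul_of_nonneg_left (pow_le_one₀ (norm_nonneg q) hq.le) (norm_nonneg x)
      _ = ‖x‖ := mul_one _
      _ < 1 := hx
  rw [h1] at h2
  simp at h2

lemma multipliable_prod (hx : ‖x‖ < 1) (hq : ‖q‖ < 1) :
    Multipliable (fun k : ℕ => 1 + x * q ^ k) := by
  apply Complex.multipliable_of_summable_log
  apply Summable.of_norm_bounded
    (g := fun k => (‖x‖ * (1 - ‖x‖)⁻¹ / 2 + 1) * (‖x‖ * ‖q‖ ^ k)) ?_ ?_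
  · exact ((summable_geometric_of_lt_one (norm_nonneg q) hq).mul_left _).mul_left _
  · intro k
    have hz : ‖x * q ^ k‖ < 1 := by
      rw [norm_mul, norm_pow]
      calc ‖x‖ * ‖q‖ ^ k ≤ ‖x‖ * 1 :=
            mul_le_mul_of_nonneg_left (pow_le_one₀ (norm_nonneg q) hq.le) (norm_nonneg x)
        _ = ‖x‖ := mul_one _
        _ < 1 := hx
    have hzx : ‖x * q ^ k‖ ≤ ‖x‖ := by
      rw [norm_mul, norm_pow]
      calc ‖x‖ * ‖q‖ ^ k ≤ ‖x‖ * 1 :=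
            mul_le_mul_of_nonneg_left (pow_le_one₀ (norm_nonneg q) hq.le) (norm_nonneg x)
        _ = ‖x‖ := mul_one _
    calc ‖Complex.log (1 + x * q ^ k)‖
        ≤ ‖x * q ^ k‖ ^ 2 * (1 - ‖x * q ^ k‖)⁻¹ / 2 + ‖x * q ^ k‖ :=
          Complex.norm_log_one_add_le hz
      _ ≤ (‖x‖ * (1 - ‖x‖)⁻¹ / 2 + 1) * ‖x * q ^ k‖ := by
          have h1 : (0:ℝ) < 1 - ‖x‖ := by linarith
          have h2 : (0:ℝ) < 1 - ‖x * q ^ k‖ := by linarith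
          have hinv : (1 - ‖x * q ^ k‖)⁻¹ ≤ (1 - ‖x‖)⁻¹ := by
            apply inv_anti₀ h1
            linarith
          have : ‖x * q ^ k‖ ^ 2 * (1 - ‖x * q ^ k‖)⁻¹ ≤ (‖x‖ * (1 - ‖x‖)⁻¹) * ‖x * q ^ k‖ := by
            rw [sq]
            calc ‖x * q ^ k‖ * ‖x * q ^ k‖ * (1 - ‖x * q ^ k‖)⁻¹
                ≤ ‖x‖ * ‖x * q ^ k‖ * (1 - ‖x‖)⁻¹ := by
                  apply mul_le_mul _ hinv (by positivity) (by positivity)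
                  exact mul_le_mul_of_nonneg_right hzx (norm_nonneg _)
              _ = (‖x‖ * (1 - ‖x‖)⁻¹) * ‖x * q ^ k‖ := by ring
          linarith
      _ ≤ (‖x‖ * (1 - ‖x‖)⁻¹ / 2 + 1) * (‖x‖ * ‖q‖ ^ k) := by
          apply mul_le_mul_of_nonneg_left _ _
          · rw [norm_mul, norm_pow]
          · have h1 : (0:ℝ) < 1 - ‖x‖ := by linarith
            positivity

theorem main (hx : ‖x‖ < 1) (hq : ‖q‖ < 1) :
    (∏' k : ℕ, (1 + x * q ^ k)) = S q x := by
  have hmul := multipliable_prod hx hq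
  have h1 : Tendsto (fun N : ℕ => ∏ k ∈ range N, (1 + x * q ^ k)) atTop
      (𝓝 (∏' k : ℕ, (1 + x * q ^ k))) := hmul.hasProd.tendsto_prod_nat
  have h2 := S_tendsto_one hq hx
  have h3 : Tendsto (fun N : ℕ => (∏ k ∈ range N, (1 + x * q ^ k)) * S q (x * q ^ N)) atTop
      (𝓝 ((∏' k : ℕ, (1 + x * q ^ k)) * 1)) := h1.mul h2
  have h4 : (fun N : ℕ => (∏ k ∈ range N, (1 + x * q ^ k)) * S q (x * q ^ N)) =
      fun _ => S q x := by
    funext N; exact (iterate_eq hq hx N).symm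
  rw [h4] at h3
  have := tendsto_nhds_unique tendsto_const_nhds h3
  rw [this, mul_one]

end EulerAux

open EulerAux in
/-- Euler's identity: `(-x;q)_∞ = ∑_{n≥0} xⁿ q^{n(n-1)/2}/(q;q)_n` for `|x| < 1`, `|q| < 1`. -/
theorem euler_neg_pochhammer (x q : ℂ) (hx : ‖x‖ < 1) (hq : ‖q‖ < 1) :
    (∏' k : ℕ, (1 + x * q ^ k)) =
      ∑' n : ℕ, x ^ n * q ^ (n * (n - 1) / 2) / ∏ k ∈ Finset.range n, (1 - q ^ (k + 1)) := by
  rw [EulerAux.main hx hq]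
  rfl
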